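/- arXiv:math/0103237 — 5 statements merged into one kernel-verified Lean document; each statement's English description precedes it below -/
import Mathlib

section
/- Let R be a commutative ring, m ≥ 1 and e ≥ 1 integers, and A an m×m matrix over R. Define the (e·m)×(e·m) matrix B over R, with rows and columns indexed by pairs (i,a) with i ∈ Fin e and a ∈ Fin m, by: B((i,a),(j,b)) equals 1 if j = i+1 and a = b; equals A(a,b) if i = e−1 and j = 0; and equals 0 otherwise. Then, in the polynomial ring R[T], det(1_{em} − T·B) = det(1_m − T^e·A), where 1_{em} and 1_m denote identity matrices and the matrices are viewed as matrices over R[T]. -/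
open Polynomial Matrix Finset

namespace Stmt0Aux

variable {R : Type} [CommRing R]

/-- Upper unitriangular matrix of block shifts. -/
noncomputable def U (m e : ℕ) : Matrix (Fin e × Fin m) (Fin e × Fin m) R[X] :=
  fun p q => if p.2 = q.2 ∧ (p.1 : ℕ) ≤ (q.1 : ℕ) then X ^ ((q.1 : ℕ) - (p.1 : ℕ)) else 0

/-- The product `(1 - X • B) * U`. -/
noncomputable def N (m e : ℕ) (A : Matrix (Fin m) (Fin m) R) :
    Matrix (Fin e × Fin m) (Fin e × Fin m) R[X] :=
  fun p q =>
    if (p.1 : ℕ) = e - 1 then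
      (if p.2 = q.2 ∧ (q.1 : ℕ) = e - 1 then 1 else 0) - X ^ ((q.1 : ℕ) + 1) * C (A p.2 q.2)
    else if p = q then 1 else 0

theorem U_apply (m e : ℕ) (p q : Fin e × Fin m) :
    U (R := R) m e p q
      = if p.2 = q.2 ∧ (p.1 : ℕ) ≤ (q.1 : ℕ) then X ^ ((q.1 : ℕ) - (p.1 : ℕ)) else 0 := rfl

theorem N_apply (m e : ℕ) (A : Matrix (Fin m) (Fin m) R) (p q : Fin e × Fin m) :
    N m e A p q =
      if (p.1 : ℕ) = e - 1 then
        (if p.2 = q.2 ∧ (q.1 : ℕ) = e - 1 then 1 else 0) - X ^ ((q.1 : ℕ) + 1) * C (A p.2 q.2)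
      else if p = q then 1 else 0 := rfl

theorem det_U (m e : ℕ) : (U (R := R) m e).det = 1 := by
  have hbt : BlockTriangular (U (R := R) m e) Prod.fst := by
    intro p q h
    simp only [U_apply]
    rw [if_neg]
    rintro ⟨-, hle⟩
    exact absurd (Fin.lt_iff_val_lt_val.mp h) (not_lt.mpr hle)
  rw [hbt.det]
  apply Finset.prod_eq_one
  intro k _
  have : (U (R := R) m e).toSquareBlock Prod.fst k = 1 := by
    apply Matrix.ext
    rintro ⟨p, hp⟩ ⟨q, hq⟩
    rw [toSquareBlock_def, Matrix.one_apply]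
    simp only [Matrix.of_apply, Subtype.mk.injEq, U_apply]
    have h1 : p.1 = q.1 := by rw [hp, hq]
    by_cases h2 : p.2 = q.2
    · have hpq : p = q := Prod.ext h1 h2
      simp [hpq]
    · have hpq : p ≠ q := fun h => h2 (by rw [h])
      simp [h2, hpq]
  rw [this, det_one]

theorem det_N (m e : ℕ) (hm : 1 ≤ m) (he : 1 ≤ e) (A : Matrix (Fin m) (Fin m) R) :
    (N m e A).det =
      Matrix.det ((1 : Matrix (Fin m) (Fin m) R[X]) - (X : R[X]) ^ e • A.map C) := by
  set b : Fin e × Fin m → ℕ := fun p => e - 1 - (p.1 : ℕ) with hbdef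
  have hbt : BlockTriangular (N m e A) b := by
    intro p q h
    have hq : (q.1 : ℕ) < e := q.1.2
    have hp : (p.1 : ℕ) < e := p.1.2
    have hlt : (p.1 : ℕ) < (q.1 : ℕ) := by simp only [hbdef] at h; omega
    simp only [N_apply]
    rw [if_neg (by omega), if_neg]
    intro hpq; rw [hpq] at hlt; omega
  rw [hbt.det]
  have h0mem : (0 : ℕ) ∈ Finset.univ.image b := by
    refine Finset.mem_image.mpr ⟨(⟨e - 1, by omega⟩, ⟨0, by omega⟩), Finset.mem_univ _, ?_⟩
    simp [hbdef]
  rw [Finset.prod_eq_single_of_mem 0 h0mem]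
  · -- the block at 0 is `1 - X^e • A.map C`
    let φ : Fin m ≃ {p : Fin e × Fin m // b p = 0} :=
      { toFun := fun a => ⟨(⟨e - 1, by omega⟩, a), by simp [hbdef]⟩
        invFun := fun p => p.1.2
        left_inv := fun a => rfl
        right_inv := by
          rintro ⟨⟨i, a⟩, hp⟩
          have hi : (i : ℕ) < e := i.2
          have : (i : ℕ) = e - 1 := by simp only [hbdef] at hp; omega
          apply Subtype.ext
          exact Prod.ext (Fin.ext this.symm) rfl }
    rw [← Matrix.det_submatrix_equiv_self φ]
    congr 1
    apply Matrix.ext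
    intro a c
    show N m e A (⟨e - 1, by omega⟩, a) (⟨e - 1, by omega⟩, c) = _
    simp only [N_apply, Matrix.sub_apply, Matrix.one_apply, Matrix.smul_apply, Matrix.map_apply,
      smul_eq_mul]
    have he1 : e - 1 + 1 = e := by omega
    rw [he1, if_pos trivial]
    by_cases hac : a = c <;> simp [hac]
  · intro k hk hk0
    have : (N m e A).toSquareBlock b k = 1 := by
      apply Matrix.ext
      rintro ⟨p, hp⟩ ⟨q, hq⟩
      have hple : (p.1 : ℕ) < e := p.1.2
      have hpne : (p.1 : ℕ) ≠ e - 1 := by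
        intro h; apply hk0; rw [← hp]; simp [hbdef, h]
      rw [toSquareBlock_def, Matrix.one_apply]
      simp only [Matrix.of_apply, N_apply, if_neg hpne, Subtype.mk.injEq]
    rw [this, det_one]

theorem key_mul (m e : ℕ) (he : 1 ≤ e) (A : Matrix (Fin m) (Fin m) R)
    (B : Matrix (Fin e × Fin m) (Fin e × Fin m) R)
    (hB : ∀ (i j : Fin e) (a b : Fin m),
      B (i, a) (j, b) =
        if (j : ℕ) = (i : ℕ) + 1 ∧ a = b then 1
        else if (i : ℕ) = e - 1 ∧ (j : ℕ) = 0 then A a b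
        else 0) :
    ((1 : Matrix (Fin e × Fin m) (Fin e × Fin m) R[X]) - (X : R[X]) • B.map C) * U m e
      = N m e A := by
  have hBU : ∀ (i : Fin e) (a : Fin m) (j : Fin e) (b : Fin m),
      (B.map C * U (R := R) m e) (i, a) (j, b) =
        if h : (i : ℕ) + 1 < e then U (R := R) m e (⟨(i : ℕ) + 1, h⟩, a) (j, b)
        else X ^ (j : ℕ) * C (A a b) := by
    intro i a j b
    rw [Matrix.mul_apply]
    split_ifs with h
    · -- only nonzero term at (i+1, a)
      rw [Finset.sum_eq_single ((⟨(i : ℕ) + 1, h⟩ : Fin e), a)]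
      · simp only [Matrix.map_apply, hB]
        rw [if_pos (And.intro (by trivial) (by trivial))]
        simp
      · rintro ⟨k, c⟩ - hne
        simp only [Matrix.map_apply, hB]
        rw [if_neg, if_neg, map_zero, zero_mul]
        · rintro ⟨hie, -⟩
          have : (i : ℕ) < e := i.2
          omega
        · rintro ⟨hk, hc⟩
          exact hne (Prod.ext (Fin.ext hk) hc.symm)
      · intro hmem; exact absurd (Finset.mem_univ _) hmem
    · -- i = e - 1; nonzero terms at (0, c)
      have hie : (i : ℕ) = e - 1 := by have := i.2; omega
      rw [Fintype.sum_prod_type]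
      rw [Finset.sum_eq_single (⟨0, by omega⟩ : Fin e)]
      · have : ∀ c : Fin m, U (R := R) m e ((⟨0, by omega⟩ : Fin e), c) (j, b)
            = if c = b then X ^ (j : ℕ) else 0 := by
          intro c
          simp only [U_apply]
          by_cases hc : c = b <;> simp [hc, Nat.zero_le]
        rw [Finset.sum_congr rfl fun c _ => by rw [this c]]
        rw [Finset.sum_eq_single b]
        · simp only [Matrix.map_apply, hB]
          rw [if_neg (fun hc => Nat.succ_ne_zero _ hc.1.symm), if_pos ⟨hie, trivial⟩,
            if_pos trivial]
          ring
        · intro c _ hcb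
          rw [if_neg hcb, mul_zero]
        · intro hmem; exact absurd (Finset.mem_univ _) hmem
      · intro k _ hk0
        apply Finset.sum_eq_zero
        intro c _
        simp only [Matrix.map_apply, hB]
        rw [if_neg, if_neg, map_zero, zero_mul]
        · rintro ⟨-, hk⟩
          exact hk0 (Fin.ext hk)
        · rintro ⟨hke, -⟩; omega
      · intro hmem; exact absurd (Finset.mem_univ _) hmem
  apply Matrix.ext
  rintro ⟨i, a⟩ ⟨j, b⟩
  rw [Matrix.sub_mul, Matrix.one_mul, Matrix.smul_mul]
  rw [Matrix.sub_apply, Matrix.smul_apply, hBU, smul_eq_mul]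
  have hje : (j : ℕ) < e := j.2
  have hie : (i : ℕ) < e := i.2
  split_ifs with h
  · -- case i + 1 < e, so i ≠ e - 1
    simp only [N_apply, U_apply, Prod.mk.injEq, Fin.ext_iff, Fin.val_mk]
    rw [if_neg (show ¬ (i : ℕ) = e - 1 by omega)]
    by_cases hab : a = b
    · subst hab
      simp only [true_and, and_true]
      split_ifs <;>
        first
          | (exfalso; omega)
          | ring1
          | (rw [show (j : ℕ) - (i : ℕ) = ((j : ℕ) - ((i : ℕ) + 1)) + 1 from by omega,
              pow_succ]; ring1)
          | (rw [← pow_succ',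
              show (j : ℕ) - (1 + (i : ℕ)) + 1 = (j : ℕ) - (i : ℕ) from by omega]; ring1)
          | (rw [← pow_succ',
              show (j : ℕ) - ((i : ℕ) + 1) + 1 = (j : ℕ) - (i : ℕ) from by omega]; ring1)
          | (rw [show (j : ℕ) - (i : ℕ) = 0 from by omega]; ring1)
    · rw [if_neg (fun hc => hab (Fin.ext hc.1)), if_neg (fun hc => hab (Fin.ext hc.1)),
        if_neg (fun hc => hab (Fin.ext hc.2))]
      ring
  · -- case i = e - 1
    have hie1 : (i : ℕ) = e - 1 := by omega
    simp only [N_apply, U_apply]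
    rw [if_pos hie1]
    by_cases hab : a = b
    · subst hab
      by_cases hje1 : (j : ℕ) = e - 1
      · rw [if_pos ⟨rfl, show (i : ℕ) ≤ (j : ℕ) by omega⟩, if_pos ⟨rfl, hje1⟩,
          show (j : ℕ) - (i : ℕ) = 0 from by omega, pow_zero, pow_succ]
        ring
      · rw [if_neg (fun hc => absurd hc.2 (by omega)), if_neg (fun hc => hje1 hc.2), pow_succ]
        ring
    · rw [if_neg (fun hc => hab hc.1), if_neg (fun hc => hab hc.1), pow_succ]
      ring

end Stmt0Aux

/-- For a commutative ring `R`, `m ≥ 1`, `e ≥ 1`, an `m×m` matrix `A` over `R`,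
and the `(e·m)×(e·m)` block cyclic matrix `B` described below, one has
`det(1 - T·B) = det(1 - T^e·A)` in `R[T]`. -/
theorem stmt_0 {R : Type} [CommRing R] (m e : ℕ) (hm : 1 ≤ m) (he : 1 ≤ e)
    (A : Matrix (Fin m) (Fin m) R)
    (B : Matrix (Fin e × Fin m) (Fin e × Fin m) R)
    (hB : ∀ (i j : Fin e) (a b : Fin m),
      B (i, a) (j, b) =
        if (j : ℕ) = (i : ℕ) + 1 ∧ a = b then 1
        else if (i : ℕ) = e - 1 ∧ (j : ℕ) = 0 then A a b
        else 0) :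
    Matrix.det
        ((1 : Matrix (Fin e × Fin m) (Fin e × Fin m) (Polynomial R)) -
          (Polynomial.X : Polynomial R) • B.map Polynomial.C) =
      Matrix.det
        ((1 : Matrix (Fin m) (Fin m) (Polynomial R)) -
          ((Polynomial.X : Polynomial R) ^ e) • A.map Polynomial.C) := by
  calc
    Matrix.det ((1 : Matrix (Fin e × Fin m) (Fin e × Fin m) (Polynomial R)) -
        (Polynomial.X : Polynomial R) • B.map Polynomial.C)
      = Matrix.det ((1 - (Polynomial.X : Polynomial R) • B.map Polynomial.C) *
          Stmt0Aux.U m e) := by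
        rw [Matrix.det_mul, Stmt0Aux.det_U, mul_one]
    _ = (Stmt0Aux.N m e A).det := by rw [Stmt0Aux.key_mul m e he A B hB]
    _ = _ := Stmt0Aux.det_N m e hm he A
end

section
/- Let R be an integral domain, d ≥ 1, u ≥ 1 and N ≥ 1 integers, and ζ ∈ R a primitive N-th root of unity. Let f be a polynomial in d variables over R (an element of MvPolynomial (Fin d) R) such that every exponent vector α in the support of f satisfies α_i ≥ 1 for all i and α_1 + ⋯ + α_d < N·u. Then Σ_{j : Fin d → Fin N} f(ζ^{j_1}, …, ζ^{j_d}) = N^d · Σ_β coeff_{N·β}(f), where the right-hand sum ranges over all exponent vectors β : Fin d → ℕ with β_i ≥ 1 for all i and β_1 + ⋯ + β_d < u, N·β denotes componentwise multiplication, and N^d is taken in R. -/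
/-- Dwork's trace formula on the torus. -/
theorem stmt_1 {R : Type} [CommRing R] [IsDomain R] (d u N : ℕ)
    (hd : 1 ≤ d) (hu : 1 ≤ u) (hN : 1 ≤ N)
    (ζ : R) (hζ : IsPrimitiveRoot ζ N)
    (f : MvPolynomial (Fin d) R)
    (hf : ∀ α ∈ f.support, (∀ i, 1 ≤ α i) ∧ (∑ i, α i) < N * u) :
    ∑ j : Fin d → Fin N, MvPolynomial.eval (fun i => ζ ^ (j i : ℕ)) f =
      (N : R) ^ d *
        ∑ β ∈ (Fintype.piFinset fun _ : Fin d => Finset.range u).filter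
            (fun β : Fin d → ℕ => (∀ i, 1 ≤ β i) ∧ (∑ i, β i) < u),
          MvPolynomial.coeff (Finsupp.equivFunOnFinite.symm fun i => N * β i) f := by
  classical
  -- character sum
  have key : ∀ k : ℕ, ∑ j : Fin N, (ζ ^ k) ^ (j : ℕ) = if N ∣ k then (N : R) else 0 := by
    intro k
    by_cases h : N ∣ k
    · rw [if_pos h]
      have h1 : ζ ^ k = 1 := (hζ.pow_eq_one_iff_dvd k).mpr h
      simp [h1]
    · rw [if_neg h]
      have h1 : ζ ^ k ≠ 1 := fun hc => h ((hζ.pow_eq_one_iff_dvd k).mp hc)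
      have h2 : (ζ ^ k) ^ N = 1 := by
        rw [← pow_mul, mul_comm, pow_mul, hζ.pow_eq_one, one_pow]
      have h3 : (∑ i ∈ Finset.range N, (ζ ^ k) ^ i) * (ζ ^ k - 1) = 0 := by
        rw [geom_sum_mul, h2, sub_self]
      rw [Fin.sum_univ_eq_sum_range]
      rcases mul_eq_zero.mp h3 with h4 | h4
      · exact h4
      · exact absurd (sub_eq_zero.mp h4) h1
  -- rewrite LHS as a sum over divisible exponents
  have lhs_eq : ∑ j : Fin d → Fin N, MvPolynomial.eval (fun i => ζ ^ (j i : ℕ)) f =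
      (N : R) ^ d * ∑ α ∈ f.support.filter (fun α => ∀ i, N ∣ α i),
        MvPolynomial.coeff α f := by
    calc ∑ j : Fin d → Fin N, MvPolynomial.eval (fun i => ζ ^ (j i : ℕ)) f
        = ∑ j : Fin d → Fin N, ∑ α ∈ f.support,
            MvPolynomial.coeff α f * ∏ i, (ζ ^ (α i)) ^ (j i : ℕ) := by
          refine Finset.sum_congr rfl fun j _ => ?_
          rw [MvPolynomial.eval_eq']
          refine Finset.sum_congr rfl fun α _ => ?_
          congr 1
          refine Finset.prod_congr rfl fun i _ => ?_
          rw [← pow_mul, ← pow_mul, mul_comm]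
      _ = ∑ α ∈ f.support, MvPolynomial.coeff α f *
            ∑ j : Fin d → Fin N, ∏ i, (ζ ^ (α i)) ^ (j i : ℕ) := by
          rw [Finset.sum_comm]
          simp [Finset.mul_sum]
      _ = ∑ α ∈ f.support, MvPolynomial.coeff α f *
            (if (∀ i, N ∣ α i) then (N : R) ^ d else 0) := by
          refine Finset.sum_congr rfl fun α _ => ?_
          congr 1
          rw [← Fintype.prod_sum (fun i (j : Fin N) => (ζ ^ (α i)) ^ (j : ℕ))]
          rw [Finset.prod_congr rfl fun i _ => key (α i)]
          by_cases h : ∀ i, N ∣ α i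
          · rw [if_pos h, Finset.prod_congr rfl fun i _ => if_pos (h i)]
            simp
          · rw [if_neg h]
            push_neg at h
            obtain ⟨i, hi⟩ := h
            exact Finset.prod_eq_zero (Finset.mem_univ i) (if_neg hi)
      _ = (N : R) ^ d * ∑ α ∈ f.support.filter (fun α => ∀ i, N ∣ α i),
            MvPolynomial.coeff α f := by
          rw [Finset.mul_sum, Finset.sum_filter]
          refine Finset.sum_congr rfl fun α _ => ?_
          by_cases h : ∀ i, N ∣ α i <;> simp [h, mul_comm]
  rw [lhs_eq]
  congr 1
  -- now match the two index sets
  set S := (Fintype.piFinset fun _ : Fin d => Finset.range u).filter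
      (fun β : Fin d → ℕ => (∀ i, 1 ≤ β i) ∧ (∑ i, β i) < u) with hS
  have hdrop : ∑ β ∈ S.filter
        (fun β => (Finsupp.equivFunOnFinite.symm fun i => N * β i) ∈ f.support),
        MvPolynomial.coeff (Finsupp.equivFunOnFinite.symm fun i => N * β i) f
      = ∑ β ∈ S,
        MvPolynomial.coeff (Finsupp.equivFunOnFinite.symm fun i => N * β i) f := by
    refine Finset.sum_filter_of_ne fun β _ hne => ?_
    exact MvPolynomial.mem_support_iff.mpr hne
  rw [← hdrop]
  have happ : ∀ (g : Fin d → ℕ) (i : Fin d),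
      (Finsupp.equivFunOnFinite.symm g) i = g i := fun g i => rfl
  refine Finset.sum_nbij' (i := fun α : Fin d →₀ ℕ => fun k => α k / N)
    (j := fun β : Fin d → ℕ => Finsupp.equivFunOnFinite.symm fun i => N * β i)
    ?_ ?_ ?_ ?_ ?_
  · -- maps filtered support into filtered S
    intro α hα
    rw [Finset.mem_filter] at hα
    obtain ⟨hαs, hdvd⟩ := hα
    obtain ⟨hpos, hsum⟩ := hf α hαs
    have heq : ∀ i, N * (α i / N) = α i := fun i => Nat.mul_div_cancel' (hdvd i)
    have hβpos : ∀ i : Fin d, 1 ≤ α i / N := by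
      intro i
      rcases hdvd i with ⟨m, hm⟩
      have hm1 : 1 ≤ m := by
        rcases Nat.eq_zero_or_pos m with h0 | h0
        · exfalso; rw [h0, Nat.mul_zero] at hm; have := hpos i; omega
        · exact h0
      rw [hm, Nat.mul_div_cancel_left _ hN]
      exact hm1
    have hβsum : (∑ i : Fin d, α i / N) < u := by
      have h5 : N * (∑ i : Fin d, α i / N) < N * u := by
        rw [Finset.mul_sum]
        calc ∑ i : Fin d, N * (α i / N) = ∑ i : Fin d, α i :=
              Finset.sum_congr rfl fun i _ => heq i
          _ < N * u := hsum
      exact Nat.lt_of_mul_lt_mul_left h5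
    have hback : (Finsupp.equivFunOnFinite.symm fun i => N * (α i / N)) = α := by
      rw [show (fun i => N * (α i / N)) = ⇑α from funext heq,
        Finsupp.equivFunOnFinite_symm_coe]
    rw [Finset.mem_filter, hS, Finset.mem_filter]
    refine ⟨⟨?_, hβpos, hβsum⟩, ?_⟩
    · rw [Fintype.mem_piFinset]
      intro i
      rw [Finset.mem_range]
      calc α i / N ≤ ∑ k : Fin d, α k / N :=
            Finset.single_le_sum (f := fun k : Fin d => α k / N)
              (fun k _ => Nat.zero_le _) (Finset.mem_univ i)
        _ < u := hβsum
    · rwa [hback]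
  · -- reverse direction
    intro β hβ
    rw [Finset.mem_filter] at hβ
    obtain ⟨hβS, hmem⟩ := hβ
    rw [Finset.mem_filter]
    refine ⟨hmem, fun i => ?_⟩
    rw [happ]
    exact dvd_mul_right N (β i)
  · -- left inverse
    intro α hα
    rw [Finset.mem_filter] at hα
    ext i
    rw [happ]
    exact Nat.mul_div_cancel' (hα.2 i)
  · -- right inverse
    intro β hβ
    funext i
    exact Nat.mul_div_cancel_left (β i) hN
  · -- values agree
    intro α hα
    rw [Finset.mem_filter] at hα
    congr 1
    ext i
    rw [happ]
    exact (Nat.mul_div_cancel' (hα.2 i)).symm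
end

section
/- Let p be a prime, k an algebraically closed field of characteristic p, m ≥ 1, and A an m×m matrix over 𝕎 k. Then the map from (𝕎 k)^m to itself sending v to v − A·σ(v), where σ(v) is the vector obtained by applying frobenius to each entry of v and A·(−) is matrix–vector multiplication, is surjective. -/
/-!
Modulo `p`, the equation `v - A σ(v) = c` becomes `x - T x = c̄` over `k`, where
`T x = B x^{(p)}` is Frobenius-semilinear. The iterates `Tⁿ c̄` span a finite-dimensional space,
so `T^{d+1} c̄ = ∑_{i ≤ d} bᵢ Tⁱ c̄` for some `d`, and the ansatz `x = ∑_{i ≤ d} aᵢ Tⁱ c̄` is a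
solution as soon as `a₀ = 1 + b₀ tᵖ`, `a_{n+1} = a_nᵖ + b_{n+1} tᵖ` and `t = a_d`. This is a
fixed-point equation `P(t) = t` for a polynomial with `P' = 0`, solvable because `k` is
algebraically closed. Since `v ↦ v - A σ(v)` is additive and commutes with multiplication by `p`,
and `𝕎 k` is `p`-adically complete, solutions modulo `p` lift by successive approximation.
-/

open Function Polynomial Finset

section FrobeniusSemilinear

variable {k : Type*} [Field k] (p : ℕ) [CharP k p]

noncomputable def frobeniusRecursionPoly (b : ℕ → k) : ℕ → k[X]
  | 0 => C (b 0) * X ^ p + 1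
  | n + 1 => frobeniusRecursionPoly b n ^ p + C (b (n + 1)) * X ^ p

theorem derivative_frobeniusRecursionPoly (b : ℕ → k) (n : ℕ) :
    derivative (frobeniusRecursionPoly p b n) = 0 := by
  cases n <;> simp [frobeniusRecursionPoly, derivative_pow]

theorem exists_frobeniusRecursion [IsAlgClosed k] (b : ℕ → k) (d : ℕ) :
    ∃ a : ℕ → k, a 0 = 1 + b 0 * a d ^ p ∧ ∀ n, a (n + 1) = a n ^ p + b (n + 1) * a d ^ p := by
  set P := frobeniusRecursionPoly p b d - X
  have hP : P.degree ≠ 0 := by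
    intro h
    have := congrArg derivative (eq_C_of_degree_eq_zero h)
    simp [P, derivative_frobeniusRecursionPoly] at this
  obtain ⟨t, ht⟩ := IsAlgClosed.exists_root P hP
  have hfix : (frobeniusRecursionPoly p b d).eval t = t := by
    simpa [P, sub_eq_zero] using ht
  refine ⟨fun n => (frobeniusRecursionPoly p b n).eval t, ?_, fun n => ?_⟩ <;>
    simp [frobeniusRecursionPoly, hfix, add_comm]

variable [Fact p.Prime] [IsAlgClosed k] {V : Type*} [AddCommGroup V] [Module k V]

theorem exists_sub_apply_eq_of_orbit_relation (T : V →ₛₗ[frobenius k p] V) (e : ℕ → V)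
    (he : ∀ n, T (e n) = e (n + 1)) (b : ℕ → k) (d : ℕ)
    (hrel : e (d + 1) = ∑ i ∈ range (d + 1), b i • e i) :
    ∃ x, x - T x = e 0 := by
  obtain ⟨a, ha0, ha⟩ := exists_frobeniusRecursion p b d
  refine ⟨∑ i ∈ range (d + 1), a i • e i, ?_⟩
  have hTx : T (∑ i ∈ range (d + 1), a i • e i) =
      ∑ i ∈ range d, a i ^ p • e (i + 1) + ∑ i ∈ range (d + 1), (b i * a d ^ p) • e i := by
    simp only [map_sum, map_smulₛₗ, he, frobenius_def]
    rw [sum_range_succ, hrel, smul_sum]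
    simp only [smul_smul, mul_comm]
  rw [hTx, sum_range_succ' _ d, sum_range_succ' (fun i => (b i * a d ^ p) • e i)]
  simp only [ha, ha0, add_smul, sum_add_distrib]
  rw [one_smul]
  abel

theorem surjective_sub_apply_of_frobenius_semilinear [FiniteDimensional k V]
    (T : V →ₛₗ[frobenius k p] V) : Surjective fun x => x - T x := by
  intro c
  set e : ℕ → V := fun n => T^[n] c
  have he : ∀ n, T (e n) = e (n + 1) := fun n => (iterate_succ_apply' T n c).symm
  obtain ⟨d, hd⟩ := monotone_stabilizes_iff_noetherian.mpr inferInstance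
    ⟨fun n => Submodule.span k (e '' Set.Iio n), fun m n hmn =>
      Submodule.span_mono (Set.image_mono (Set.Iio_subset_Iio hmn))⟩
  have hmem : e (d + 1) ∈ Submodule.span k (e '' ↑(range (d + 1))) := by
    have hstab : Submodule.span k (e '' Set.Iio (d + 1)) =
        Submodule.span k (e '' Set.Iio (d + 2)) :=
      (hd (d + 1) d.le_succ).symm.trans (hd (d + 2) (by omega))
    rw [coe_range, hstab]
    exact Submodule.subset_span ⟨d + 1, by simp, rfl⟩
  obtain ⟨l, hl, hle⟩ := (Finsupp.mem_span_image_iff_linearCombination k).mp hmem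
  rw [Finsupp.linearCombination_apply_of_mem_supported k hl] at hle
  exact exists_sub_apply_eq_of_orbit_relation p T e he l d hle.symm

end FrobeniusSemilinear

section AdicLifting

variable {R : Type*} [CommRing R] {π : R}

theorem smodEq_span_singleton_pow_iff_dvd {x y : R} {n : ℕ} :
    x ≡ y [SMOD (Ideal.span {π} ^ n • ⊤ : Submodule R R)] ↔ π ^ n ∣ x - y := by
  simp only [SModEq.sub_mem, smul_eq_mul, Ideal.mul_top, Ideal.span_singleton_pow,
    Ideal.mem_span_singleton]

theorem eq_zero_of_forall_pow_dvd [IsHausdorff (Ideal.span {π}) R] {x : R}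
    (h : ∀ n, π ^ n ∣ x) : x = 0 :=
  IsHausdorff.haus inferInstance x fun n =>
    smodEq_span_singleton_pow_iff_dvd.mpr (by simpa using h n)

theorem exists_forall_pow_dvd_sub_of_pow_dvd_sub_succ [IsPrecomplete (Ideal.span {π}) R]
    {f : ℕ → R} (hf : ∀ n, π ^ n ∣ f (n + 1) - f n) : ∃ w, ∀ n, π ^ n ∣ w - f n := by
  have hcauchy : ∀ {m n}, m ≤ n → π ^ m ∣ f n - f m := by
    intro m n hmn
    induction n, hmn using Nat.le_induction with
    | base => simp
    | succ n hmn ih =>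
      rw [← sub_add_sub_cancel]
      exact dvd_add ((pow_dvd_pow π hmn).trans (hf n)) ih
  obtain ⟨w, hw⟩ := IsPrecomplete.prec inferInstance fun hmn =>
    smodEq_span_singleton_pow_iff_dvd.mpr (dvd_sub_comm.mp (hcauchy hmn))
  exact ⟨w, fun n => dvd_sub_comm.mp (smodEq_span_singleton_pow_iff_dvd.mp (hw n))⟩

theorem AddMonoidHom.map_pow_smul_of_map_smul {M : Type*} [AddCommGroup M] [Module R M]
    (L : M →+ M) (hL : ∀ x, L (π • x) = π • L x) (n : ℕ) (x : M) :
    L (π ^ n • x) = π ^ n • L x := by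
  induction n generalizing x with
  | zero => simp
  | succ n ih => rw [pow_succ, mul_smul, ih, hL, ← mul_smul]

variable {ι : Type*}

theorem exists_successive_approximations (L : (ι → R) →+ (ι → R)) (hL : ∀ x, L (π • x) = π • L x)
    (hres : ∀ c, ∃ u r, c = L u + π • r) (b : ι → R) :
    ∃ v : ℕ → ι → R, (∀ n, ∃ y, v (n + 1) = v n + π ^ n • y) ∧
      ∀ n, ∃ r, b = L (v n) + π ^ n • r := by
  choose u r hur using hres
  let s : ℕ → (ι → R) × (ι → R) := fun n =>
    Nat.rec (0, b) (fun n s => (s.1 + π ^ n • u s.2, r s.2)) n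
  refine ⟨fun n => (s n).1, fun n => ⟨u (s n).2, rfl⟩, fun n => ⟨(s n).2, ?_⟩⟩
  induction n with
  | zero => simp [s]
  | succ n ih =>
    calc b = L (s n).1 + π ^ n • (L (u (s n).2) + π • r (s n).2) := by rw [← hur]; exact ih
      _ = L (s (n + 1)).1 + π ^ (n + 1) • (s (n + 1)).2 := by
        simp only [s, map_add, L.map_pow_smul_of_map_smul hL, smul_add, smul_smul, ← pow_succ,
          add_assoc]

theorem surjective_of_forall_exists_eq_add_smul [IsAdicComplete (Ideal.span {π}) R]
    (L : (ι → R) →+ (ι → R)) (hL : ∀ x, L (π • x) = π • L x)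
    (hres : ∀ c, ∃ u r, c = L u + π • r) : Surjective L := by
  intro b
  obtain ⟨v, hv_succ, hv_approx⟩ := exists_successive_approximations L hL hres b
  choose w hw using fun i => exists_forall_pow_dvd_sub_of_pow_dvd_sub_succ (π := π)
    (f := fun n => v n i) fun n => by obtain ⟨y, hy⟩ := hv_succ n; exact ⟨y i, by simp [hy]⟩
  refine ⟨w, funext fun i => (sub_eq_zero.mp (eq_zero_of_forall_pow_dvd (π := π) fun n => ?_)).symm⟩
  obtain ⟨r, hr⟩ := hv_approx n
  choose y hy using fun i => hw i n
  have hw_eq : w = v n + π ^ n • y := funext fun i => by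
    rw [Pi.add_apply, Pi.smul_apply, smul_eq_mul, ← hy i, add_sub_cancel]
  have hdiff : b - L w = π ^ n • (r - L y) := by
    rw [hw_eq, map_add, L.map_pow_smul_of_map_smul hL]
    nth_rw 1 [hr]
    rw [smul_sub]
    abel
  exact ⟨(r - L y) i, congrFun hdiff i⟩

end AdicLifting

namespace Matrix

variable {ι R S : Type*} [Fintype ι] [CommRing R] [CommRing S]

def mulVecSemilinear (A : Matrix ι ι R) (σ : R →+* R) : (ι → R) →ₛₗ[σ] (ι → R) where
  toFun v := A *ᵥ (σ ∘ v)
  map_add' v w := by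
    rw [← mulVec_add]
    congr 1
    ext i
    simp
  map_smul' a v := by
    rw [← mulVec_smul]
    congr 1
    ext i
    simp

theorem mulVecSemilinear_apply (A : Matrix ι ι R) (σ : R →+* R) (v : ι → R) :
    A.mulVecSemilinear σ v = A *ᵥ (σ ∘ v) := rfl

theorem map_mulVecSemilinear_apply (A : Matrix ι ι R) {σ : R →+* R} {τ : S →+* S} (φ : R →+* S)
    (hφ : ∀ x, φ (σ x) = τ (φ x)) (v : ι → R) (i : ι) :
    φ (A.mulVecSemilinear σ v i) = (A.map φ).mulVecSemilinear τ (φ ∘ v) i := by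
  simp only [mulVecSemilinear_apply, RingHom.map_mulVec]
  congr 2
  ext j
  exact hφ (v j)

end Matrix

namespace WittVector

variable {p : ℕ} [Fact p.Prime] {k : Type*} [Field k] [CharP k p] [IsAlgClosed k]
  {ι : Type*} [Fintype ι]

local notation "𝕎" => WittVector p

theorem exists_eq_sub_mulVecSemilinear_add_p_smul (A : Matrix ι ι (𝕎 k)) (c : ι → 𝕎 k) :
    ∃ u r, c = (u - A.mulVecSemilinear frobenius u) + (p : 𝕎 k) • r := by
  obtain ⟨x, hx⟩ := surjective_sub_apply_of_frobenius_semilinear p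
    ((A.map constantCoeff).mulVecSemilinear (_root_.frobenius k p)) (constantCoeff ∘ c)
  obtain ⟨u, rfl⟩ := (constantCoeff_surjective (p := p) (R := k)).comp_left x
  have hres : ∀ i, c i - (u - A.mulVecSemilinear frobenius u) i ∈ Ideal.span {(p : 𝕎 k)} := by
    intro i
    have hcc : constantCoeff ((u - A.mulVecSemilinear frobenius u) i) = constantCoeff (c i) := by
      rw [Pi.sub_apply, map_sub, A.map_mulVecSemilinear_apply constantCoeff
        (τ := _root_.frobenius k p) (fun x => coeff_frobenius_charP p x 0)]
      exact congrFun hx i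
    rw [mem_span_p_iff_coeff_zero_eq_zero, ← constantCoeff_apply, map_sub, hcc, sub_self]
  choose r hr using fun i => Ideal.mem_span_singleton'.mp (hres i)
  exact ⟨u, r, funext fun i => by simp [hr, mul_comm]⟩

theorem surjective_sub_mulVecSemilinear_frobenius (A : Matrix ι ι (𝕎 k)) :
    Surjective fun v => v - A.mulVecSemilinear frobenius v := by
  let L := AddMonoidHom.id (ι → 𝕎 k) - (A.mulVecSemilinear frobenius).toAddMonoidHom
  have hL : ∀ x, L ((p : 𝕎 k) • x) = (p : 𝕎 k) • L x := fun x => by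
    change (p : 𝕎 k) • x - A.mulVecSemilinear frobenius ((p : 𝕎 k) • x) =
      (p : 𝕎 k) • (x - A.mulVecSemilinear frobenius x)
    rw [map_smulₛₗ, map_natCast, smul_sub]
  exact surjective_of_forall_exists_eq_add_smul L hL (exists_eq_sub_mulVecSemilinear_add_p_smul A)

end WittVector

theorem stmt_4_general (p : ℕ) [Fact p.Prime] (k : Type) [Field k] [IsAlgClosed k] [CharP k p]
    (m : ℕ) (A : Matrix (Fin m) (Fin m) (WittVector p k)) :
    Function.Surjective
      (fun v : Fin m → WittVector p k =>
        v - A.mulVec fun i => WittVector.frobenius (v i)) :=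
  WittVector.surjective_sub_mulVecSemilinear_frobenius A

/-- over the Witt vectors of an algebraically closed field of characteristic `p`,
the semilinear map `v ↦ v - A·σ(v)` is surjective. -/
theorem stmt_4 (p : ℕ) [Fact p.Prime] (k : Type) [Field k] [IsAlgClosed k] [CharP k p]
    (m : ℕ) (hm : 1 ≤ m) (A : Matrix (Fin m) (Fin m) (WittVector p k)) :
    Function.Surjective
      (fun v : Fin m → WittVector p k =>
        v - A.mulVec fun i => WittVector.frobenius (v i)) :=
  stmt_4_general p k m A
end

section
/- Let p be a prime, k a field of characteristic p, m ≥ 1, and A an m×m matrix over 𝕎 k each of whose entries is divisible by p. Then the map from (𝕎 k)^m to itself sending v to v − A·σ(v), where σ(v) is the vector obtained by applying frobenius to each entry of v, is bijective. -/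
section aux

variable {p : ℕ} [Fact p.Prime] {k : Type} [Field k] [CharP k p]

/-- If `p^n ∣ x` then the first `n` coefficients of `x` vanish. -/
lemma aux_coeff_zero_of_pow_dvd :
    ∀ (n : ℕ) (x : WittVector p k), (p : WittVector p k) ^ n ∣ x →
      ∀ j < n, x.coeff j = 0 := by
  intro n
  induction n with
  | zero => intro x _ j hj; omega
  | succ n ih =>
    rintro x ⟨y, rfl⟩ j hj
    have hx : (p : WittVector p k) ^ (n + 1) * y = ((p : WittVector p k) ^ n * y) * p := by
      ring
    rw [hx]
    cases j with
    | zero => exact WittVector.mul_charP_coeff_zero _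
    | succ j =>
      rw [WittVector.mul_charP_coeff_succ]
      have : ((p : WittVector p k) ^ n * y).coeff j = 0 :=
        ih _ ⟨y, rfl⟩ j (by omega)
      rw [this, zero_pow (Fact.out : p.Prime).ne_zero]

/-- If `p^n ∣ x - y` then `x` and `y` have the same truncation at level `n`. -/
lemma aux_truncate_eq_of_pow_dvd {n : ℕ} {x y : WittVector p k}
    (h : (p : WittVector p k) ^ n ∣ x - y) :
    WittVector.truncate n x = WittVector.truncate n y := by
  rw [← sub_eq_zero, ← map_sub]
  ext i
  rw [WittVector.coeff_truncate, TruncatedWittVector.coeff_zero]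
  exact aux_coeff_zero_of_pow_dvd n _ h i i.2

lemma aux_coeff_eq_of_truncate_eq {n : ℕ} {x y : WittVector p k}
    (h : WittVector.truncate n x = WittVector.truncate n y) {j : ℕ} (hj : j < n) :
    x.coeff j = y.coeff j := by
  have := congrArg (fun z => TruncatedWittVector.coeff ⟨j, hj⟩ z) h
  simpa only [WittVector.coeff_truncate] using this

lemma aux_eq_of_truncate_eq {x y : WittVector p k}
    (h : ∀ n, WittVector.truncate n x = WittVector.truncate n y) : x = y := by
  apply WittVector.ext
  intro j
  exact aux_coeff_eq_of_truncate_eq (h (j + 1)) (Nat.lt_succ_self j)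

lemma aux_truncate_frobenius {n : ℕ} {x y : WittVector p k}
    (h : WittVector.truncate n x = WittVector.truncate n y) :
    WittVector.truncate n (WittVector.frobenius x)
      = WittVector.truncate n (WittVector.frobenius y) := by
  ext i
  rw [WittVector.coeff_truncate, WittVector.coeff_truncate,
    WittVector.coeff_frobenius_charP, WittVector.coeff_frobenius_charP,
    aux_coeff_eq_of_truncate_eq h i.2]

lemma aux_frobenius_p_dvd {n : ℕ} {x : WittVector p k}
    (h : (p : WittVector p k) ^ n ∣ x) :
    (p : WittVector p k) ^ n ∣ WittVector.frobenius x := by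
  obtain ⟨y, rfl⟩ := h
  refine ⟨WittVector.frobenius y, ?_⟩
  rw [map_mul, map_pow, map_natCast]

end aux

/-- over the Witt vectors of a field of characteristic `p`, if every entry
of `A` is divisible by `p`, then the semilinear map `v ↦ v - A·σ(v)` is bijective. -/
theorem stmt_5 (p : ℕ) [Fact p.Prime] (k : Type) [Field k] [CharP k p]
    (m : ℕ) (hm : 1 ≤ m) (A : Matrix (Fin m) (Fin m) (WittVector p k))
    (hA : ∀ i j, (p : WittVector p k) ∣ A i j) :
    Function.Bijective
      (fun v : Fin m → WittVector p k =>
        v - A.mulVec fun i => WittVector.frobenius (v i)) := by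
  let W := WittVector p k
  set T : (Fin m → W) → (Fin m → W) :=
    fun v => A.mulVec fun i => WittVector.frobenius (v i) with hT
  -- T of a difference
  have hTsub : ∀ u v : Fin m → W, T (fun i => u i - v i) = fun j => T u j - T v j := by
    intro u v
    funext j
    simp only [hT, Matrix.mulVec, dotProduct, map_sub, mul_sub, Finset.sum_sub_distrib]
  -- divisibility gain
  have hTdvd : ∀ (n : ℕ) (v : Fin m → W),
      (∀ i, (p : W) ^ n ∣ v i) → ∀ j, (p : W) ^ (n + 1) ∣ T v j := by
    intro n v hv j
    simp only [hT, Matrix.mulVec, dotProduct]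
    refine Finset.dvd_sum fun i _ => ?_
    rw [pow_succ, mul_comm ((p : W) ^ n)]
    exact mul_dvd_mul (hA j i) (aux_frobenius_p_dvd (hv i))
  -- T respects truncation
  have hTtrunc : ∀ (n : ℕ) (u v : Fin m → W),
      (∀ i, WittVector.truncate n (u i) = WittVector.truncate n (v i)) →
      ∀ j, WittVector.truncate n (T u j) = WittVector.truncate n (T v j) := by
    intro n u v huv j
    simp only [hT, Matrix.mulVec, dotProduct, map_sum, map_mul]
    exact Finset.sum_congr rfl fun i _ => by rw [aux_truncate_frobenius (huv i)]
  constructor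
  · -- injectivity
    intro v v' h
    set u : Fin m → W := fun i => v i - v' i with hu
    have hufix : u = T u := by
      rw [hu, hTsub]
      funext j
      have h1 := congrFun h j
      simp only [Pi.sub_apply, hT] at h1 ⊢
      linear_combination h1
    have key : ∀ (n : ℕ) (i : Fin m), (p : WittVector p k) ^ n ∣ u i := by
      intro n
      induction n with
      | zero => intro i; rw [pow_zero]; exact one_dvd _
      | succ n ih =>
        intro i
        have := hTdvd n u ih i
        rwa [← hufix] at this
    have hu0 : ∀ i, u i = 0 := by
      intro i
      apply WittVector.ext
      intro j
      rw [WittVector.zero_coeff]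
      exact aux_coeff_zero_of_pow_dvd (j + 1) _ (key (j + 1) i) j (Nat.lt_succ_self j)
    funext i
    have := hu0 i
    rw [hu] at this
    exact sub_eq_zero.mp this
  · -- surjectivity
    intro w
    -- successive approximations
    set s : ℕ → (Fin m → W) := fun N => Nat.rec (fun _ => 0) (fun _ sN => w + T sN) N with hs
    have hs_succ : ∀ N, s (N + 1) = w + T (s N) := fun N => rfl
    -- consecutive differences divisible by p^N
    have hdiff : ∀ N i, (p : W) ^ N ∣ s (N + 1) i - s N i := by
      intro N
      induction N with
      | zero => intro i; rw [pow_zero]; exact one_dvd _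
      | succ N ih =>
        intro i
        have h1 : s (N + 2) i - s (N + 1) i = T (fun j => s (N + 1) j - s N j) i := by
          rw [congrFun (hTsub (s (N + 1)) (s N)) i, hs_succ (N + 1), hs_succ N]
          simp only [Pi.add_apply]
          ring
        rw [h1]
        exact hTdvd N _ ih i
    have hdiff' : ∀ M N, M ≤ N → ∀ i, (p : W) ^ M ∣ s N i - s M i := by
      intro M N hMN
      induction N, hMN using Nat.le_induction with
      | base => intro i; simp
      | succ N hMN ih =>
        intro i
        have : s (N + 1) i - s M i = (s (N + 1) i - s N i) + (s N i - s M i) := by ring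
        rw [this]
        exact dvd_add (dvd_trans (pow_dvd_pow _ hMN) (hdiff N i)) (ih i)
    -- the limit
    set v : Fin m → W := fun i => WittVector.mk p (fun j => (s (j + 1) i).coeff j) with hv
    have hvtrunc : ∀ (n : ℕ) (i : Fin m),
        WittVector.truncate n (v i) = WittVector.truncate n (s n i) := by
      intro n i
      ext j
      rw [WittVector.coeff_truncate, WittVector.coeff_truncate, hv]
      show (WittVector.mk p (fun j => (s (j + 1) i).coeff j)).coeff j = (s n i).coeff j
      rw [WittVector.coeff_mk]
      exact (aux_coeff_eq_of_truncate_eq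
        (aux_truncate_eq_of_pow_dvd (hdiff' (j + 1) n j.2 i))
        (Nat.lt_succ_self j)).symm
    refine ⟨v, ?_⟩
    funext i
    show v i - T v i = w i
    apply aux_eq_of_truncate_eq
    intro n
    have h1 : WittVector.truncate n (T v i) = WittVector.truncate n (T (s n) i) :=
      hTtrunc n v (s n) (hvtrunc n) i
    have h2 : s n i - T (s n) i = w i + (s n i - s (n + 1) i) := by
      rw [hs_succ]
      simp only [Pi.add_apply]
      ring
    have h3 : WittVector.truncate n (s n i - s (n + 1) i) = 0 := by
      have hdvd : (p : WittVector p k) ^ n ∣ (s n i - s (n + 1) i) - 0 := by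
        rw [sub_zero, show s n i - s (n + 1) i = -(s (n + 1) i - s n i) by ring]
        exact dvd_neg.mpr (hdiff n i)
      have := aux_truncate_eq_of_pow_dvd hdvd
      rwa [map_zero] at this
    calc WittVector.truncate n (v i - T v i)
        = WittVector.truncate n (v i) - WittVector.truncate n (T v i) := map_sub _ _ _
      _ = WittVector.truncate n (s n i) - WittVector.truncate n (T (s n) i) := by
          rw [hvtrunc n i, h1]
      _ = WittVector.truncate n (s n i - T (s n) i) := (map_sub _ _ _).symm
      _ = WittVector.truncate n (w i) + WittVector.truncate n (s n i - s (n + 1) i) := by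
          rw [h2, map_add]
      _ = WittVector.truncate n (w i) := by rw [h3, add_zero]
end

section
/- Let p be a prime number, n ≥ 1, and R a commutative ring in which p^n = 0. Let a, x ∈ R be elements with x − a^p ∈ p·R. Then there exists an integer N ≥ 1 such that x^N lies in the principal ideal generated by a^{N+1}. -/
/-- if `p^n = 0` in `R` and `x ≡ a^p (mod p)`, then some power `x^N`
lies in the ideal generated by `a^(N+1)`. -/
theorem stmt_7 (p : ℕ) (hp : p.Prime) (n : ℕ) (hn : 1 ≤ n)
    {R : Type} [CommRing R] (hpn : (p : R) ^ n = 0)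
    (a x : R) (hx : x - a ^ p ∈ Ideal.span {(p : R)}) :
    ∃ N : ℕ, 1 ≤ N ∧ x ^ N ∈ Ideal.span {a ^ (N + 1)} := by
  obtain ⟨c, hc⟩ := Ideal.mem_span_singleton.mp hx
  have hx' : x = a ^ p + p * c := by linear_combination hc
  have hp2 : 2 ≤ p := hp.two_le
  refine ⟨p * n, Nat.one_le_iff_ne_zero.mpr (by positivity), ?_⟩
  rw [Ideal.mem_span_singleton, hx', add_pow]
  apply Finset.dvd_sum
  intro k hk
  by_cases h : n ≤ p * n - k
  · have hz : ((p : R) * c) ^ (p * n - k) = 0 := by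
      obtain ⟨m, hm⟩ := Nat.exists_eq_add_of_le h
      rw [mul_pow, hm, pow_add, hpn, zero_mul, zero_mul]
    simp [hz]
  · push_neg at h
    have hkle : k ≤ p * n := Nat.lt_succ_iff.mp (Finset.mem_range.mp hk)
    have hnp : n ≤ p * n := Nat.le_mul_of_pos_left n (by omega)
    have hk1 : (p - 1) * n + 1 ≤ k := by
      rw [Nat.sub_one_mul]; omega
    have hpk : p * n + 1 ≤ p * k := by
      calc p * n + 1 ≤ p * ((p - 1) * n) + p := by
            have h2 : p * n ≤ p * (p - 1) * n :=
              Nat.mul_le_mul_right n (Nat.le_mul_of_pos_right p (by omega))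
            rw [mul_assoc] at h2; omega
        _ = p * ((p - 1) * n + 1) := by ring
        _ ≤ p * k := Nat.mul_le_mul_left p hk1
    have hdvd : a ^ (p * n + 1) ∣ (a ^ p) ^ k := by
      rw [← pow_mul]
      exact pow_dvd_pow a hpk
    exact (hdvd.mul_right _).mul_right _
end
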